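/- arXiv:2103.06730 — 2 statements merged into one kernel-verified Lean document; each statement's English description precedes it below -/
import Mathlib

section
/- For each z ∈ ℂ with Im z > 0 there exists a unique m ∈ ℂ with Im m > 0 satisfying -1/m = z + m; moreover this m equals the Stieltjes transform of the semicircle density: m(z) = ∫_{-2}^{2} (1/(x - z)) · (1/(2π))√(4 - x^2) dx. -/
open MeasureTheory

/-- The Stieltjes transform of the semicircle density at `z`. -/
noncomputable def mSC (z : ℂ) : ℂ :=
  ∫ x in (-2 : ℝ)..2, (1 / ((x : ℂ) - z)) *
    (((1 / (2 * Real.pi)) * Real.sqrt (4 - x ^ 2) : ℝ) : ℂ)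

open Complex

lemma sol_unique (z : ℂ) (hz : 0 < z.im) {m m' : ℂ}
    (hm : 0 < m.im ∧ -1 / m = z + m) (hm' : 0 < m'.im ∧ -1 / m' = z + m') : m = m' := by
  obtain ⟨h1, h2⟩ := hm
  obtain ⟨h1', h2'⟩ := hm'
  have hm0 : m ≠ 0 := fun h => by simp [h] at h1
  have hm0' : m' ≠ 0 := fun h => by simp [h] at h1'
  have e1 : m^2 + z*m + 1 = 0 := by field_simp at h2; linear_combination -h2
  have e1' : m'^2 + z*m' + 1 = 0 := by field_simp at h2'; linear_combination -h2'
  by_contra hne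
  have hsum : m + m' = -z := by
    have h3 : (m - m') * (m + m' + z) = 0 := by linear_combination e1 - e1'
    rcases mul_eq_zero.mp h3 with h | h
    · exact absurd (sub_eq_zero.mp h) hne
    · linear_combination h
  have hprod : m * m' = 1 := by linear_combination (-1 : ℂ) * e1 + m * hsum
  have : m' = m⁻¹ := by field_simp; linear_combination hprod
  rw [this] at h1'
  rw [Complex.inv_im] at h1'
  have hn : 0 < Complex.normSq m := normSq_pos.mpr hm0
  have : -m.im / Complex.normSq m < 0 := div_neg_of_neg_of_pos (by linarith) hn
  linarith

lemma exists_root (z : ℂ) (hz : 0 < z.im) : ∃ a : ℂ, a^2 - z*a + 1 = 0 ∧ ‖a‖ < 1 := by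
  have hz2 : z^2 - 4 ≠ 0 := by
    intro h
    have : (z - 2) * (z + 2) = 0 := by linear_combination h
    rcases mul_eq_zero.mp this with h | h
    · have := congrArg Complex.im h; simp at this; linarith
    · have := congrArg Complex.im h; simp at this; linarith
  set w : ℂ := (z^2 - 4) ^ ((2:ℕ):ℂ)⁻¹ with hw
  have hw2 : w^2 = z^2 - 4 := by
    have := Complex.cpow_nat_inv_pow (z^2-4) (two_ne_zero)
    simpa [hw] using this
  obtain ⟨a1, ha1⟩ : ∃ a1, a1 = (z - w)/2 := ⟨_, rfl⟩
  obtain ⟨a2, ha2⟩ : ∃ a2, a2 = (z + w)/2 := ⟨_, rfl⟩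
  have hr1 : a1^2 - z*a1 + 1 = 0 := by rw [ha1]; linear_combination hw2/4
  have hr2 : a2^2 - z*a2 + 1 = 0 := by rw [ha2]; linear_combination hw2/4
  have hprod : a1 * a2 = 1 := by rw [ha1, ha2]; linear_combination -hw2/4
  have habs : ‖a1‖ * ‖a2‖ = 1 := by
    rw [← norm_mul, hprod, norm_one]
  have hne1 : ‖a1‖ ≠ 1 ∨ ‖a2‖ ≠ 1 := by
    by_contra h
    push_neg at h
    obtain ⟨e1, e2⟩ := h
    -- a2 = conj a1, so z = a1 + a2 is real
    have ha1ne : a1 ≠ 0 := by intro h; rw [h] at e1; simp at e1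
    have hc : a2 = starRingEnd ℂ a1 := by
      have : a1 * starRingEnd ℂ a1 = 1 := by
        rw [Complex.mul_conj]
        norm_cast
        rw [Complex.normSq_eq_norm_sq, e1]
        norm_num
      have := mul_left_cancel₀ ha1ne (hprod.trans this.symm)
      exact this
    have hzre : z = a1 + a2 := by rw [ha1, ha2]; ring
    rw [hc] at hzre
    have : z.im = 0 := by rw [hzre]; simp
    linarith
  rcases lt_or_ge (‖a1‖) 1 with h | h
  · exact ⟨a1, hr1, h⟩
  · refine ⟨a2, hr2, ?_⟩
    rcases hne1 with h1 | h2
    · have : ‖a1‖ > 1 := lt_of_le_of_ne h (Ne.symm h1)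
      nlinarith [norm_nonneg a2]
    · have hle : ‖a2‖ ≤ 1 := by nlinarith [norm_nonneg a2]
      exact lt_of_le_of_ne hle h2


lemma alg_identity (a u c s z : ℂ) (ha0 : a ≠ 0) (hu0 : u ≠ 0)
    (h1 : 1 - a * u ≠ 0) (h2 : 1 - a * u⁻¹ ≠ 0) (hden : z - 2 * c ≠ 0)
    (hz : z = a + a⁻¹) (hc : c = (u + u⁻¹) / 2) (hs2 : s^2 = -((u - u⁻¹)^2) / 4) :
    s^2 / (z - 2 * c) =
      (2 * c + z * 1) / 4 -
        ((z - 2*a)/4) * (1 + I * ((-(a * (u * I))) / (1 - a * u))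
          - I * ((a * (u⁻¹ * I)) / (1 - a * u⁻¹))) := by
  have h2' : u - a ≠ 0 := by
    intro h
    have hu : u = a := by linear_combination h
    rw [hu, mul_inv_cancel₀ ha0] at h2
    simp at h2
  have e1 : I * ((-(a * (u * I))) / (1 - a * u)) = a * u / (1 - a * u) := by
    rw [mul_div_assoc']
    congr 1
    linear_combination (-(a*u)) * Complex.I_mul_I
  have e2 : I * ((a * (u⁻¹ * I)) / (1 - a * u⁻¹)) = (-a) / (u - a) := by
    rw [mul_div_assoc', div_eq_div_iff h2 h2']
    field_simp
    linear_combination Complex.I_sq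
  have hbr : (1 : ℂ) + I * ((-(a * (u * I))) / (1 - a * u))
      - I * ((a * (u⁻¹ * I)) / (1 - a * u⁻¹)) = 1/(1-a*u) + a/(u-a) := by
    rw [e1, e2]
    field_simp
    ring
  rw [hbr, div_eq_iff hden, hs2, hc, hz]
  field_simp
  have h1' : 1 - u * a ≠ 0 := by rwa [mul_comm] at h1
  field_simp
  ring


lemma core_integral (z a : ℂ) (hz : 0 < z.im) (ha : ‖a‖ < 1)
    (hza : a^2 - z*a + 1 = 0) :
    ∫ θ in (0:ℝ)..Real.pi, ((Real.sin θ : ℂ))^2 / (z - 2 * ((Real.cos θ : ℂ)))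
      = Real.pi * a / 2 := by
  have ha0 : a ≠ 0 := by intro h; rw [h] at hza; simp at hza
  have hzeq : z = a + a⁻¹ := by field_simp; linear_combination -hza
  have hden : ∀ θ : ℝ, z - 2 * ((Real.cos θ : ℂ)) ≠ 0 := by
    intro θ h
    have := congrArg Complex.im h
    simp at this
    linarith
  have habsu : ∀ θ : ℝ, ‖Complex.exp ((θ:ℂ) * I)‖ = 1 := fun θ =>
    Complex.norm_exp_ofReal_mul_I θ
  have habsu' : ∀ θ : ℝ, ‖Complex.exp (-((θ:ℂ) * I))‖ = 1 := by
    intro θ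
    have h3 : -((θ:ℂ) * I) = ((-θ : ℝ) : ℂ) * I := by push_cast; ring
    rw [h3, Complex.norm_exp_ofReal_mul_I]
  have h1au : ∀ θ : ℝ, 1 - a * Complex.exp ((θ:ℂ) * I) ≠ 0 := by
    intro θ h
    have h2 : a * Complex.exp ((θ:ℂ) * I) = 1 := by linear_combination -h
    have := congrArg (‖·‖) h2
    rw [norm_mul, habsu θ, norm_one, mul_one] at this
    linarith
  have h1au' : ∀ θ : ℝ, 1 - a * Complex.exp (-((θ:ℂ) * I)) ≠ 0 := by
    intro θ h
    have h2 : a * Complex.exp (-((θ:ℂ) * I)) = 1 := by linear_combination -h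
    have := congrArg (‖·‖) h2
    rw [norm_mul, habsu' θ, norm_one, mul_one] at this
    linarith
  have hslit : ∀ θ : ℝ, 1 - a * Complex.exp ((θ:ℂ) * I) ∈ Complex.slitPlane := by
    intro θ
    have : ‖-(a * Complex.exp ((θ:ℂ) * I))‖ < 1 := by
      rw [norm_neg]
      simp only [norm_mul]
      rw [habsu θ, mul_one]
      exact ha
    simpa [sub_eq_add_neg, add_comm] using Complex.mem_slitPlane_of_norm_lt_one this
  have hslit' : ∀ θ : ℝ, 1 - a * Complex.exp (-((θ:ℂ) * I)) ∈ Complex.slitPlane := by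
    intro θ
    have : ‖-(a * Complex.exp (-((θ:ℂ) * I)))‖ < 1 := by
      rw [norm_neg]
      simp only [norm_mul]
      rw [habsu' θ, mul_one]
      exact ha
    simpa [sub_eq_add_neg, add_comm] using Complex.mem_slitPlane_of_norm_lt_one this
  set B : ℝ → ℂ := fun θ =>
    (2 * ((Real.sin θ : ℂ)) + z * θ) / 4 -
      ((z - 2*a)/4) * ((θ:ℂ) + I * Complex.log (1 - a * Complex.exp ((θ:ℂ) * I))
        - I * Complex.log (1 - a * Complex.exp (-((θ:ℂ) * I)))) with hB
  have key : ∀ θ : ℝ, HasDerivAt B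
      (((Real.sin θ : ℂ))^2 / (z - 2 * ((Real.cos θ : ℂ)))) θ := by
    intro θ
    have hu0 : Complex.exp ((θ:ℂ) * I) ≠ 0 := Complex.exp_ne_zero _
    have he : HasDerivAt (fun t : ℝ => Complex.exp ((t:ℂ) * I))
        (Complex.exp ((θ:ℂ) * I) * I) θ := by
      have h1 : HasDerivAt (fun w : ℂ => Complex.exp (w * I))
          (Complex.exp ((θ:ℂ) * I) * I) ((θ:ℂ)) := by
        simpa using (((hasDerivAt_id ((θ:ℂ))).mul_const I).cexp)
      exact h1.comp_ofReal
    have he' : HasDerivAt (fun t : ℝ => Complex.exp (-((t:ℂ) * I)))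
        (-(Complex.exp (-((θ:ℂ) * I)) * I)) θ := by
      have h1 : HasDerivAt (fun w : ℂ => Complex.exp (-(w * I)))
          (-(Complex.exp (-((θ:ℂ) * I)) * I)) ((θ:ℂ)) := by
        simpa [mul_comm] using ((((hasDerivAt_id ((θ:ℂ))).mul_const I).neg).cexp)
      exact h1.comp_ofReal
    have hlog : HasDerivAt (fun t : ℝ => Complex.log (1 - a * Complex.exp ((t:ℂ) * I)))
        ((-(a * (Complex.exp ((θ:ℂ) * I) * I))) / (1 - a * Complex.exp ((θ:ℂ) * I))) θ :=
      ((he.const_mul a).const_sub 1).clog_real (hslit θ)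
    have hlog' : HasDerivAt (fun t : ℝ => Complex.log (1 - a * Complex.exp (-((t:ℂ) * I))))
        ((a * (Complex.exp (-((θ:ℂ) * I)) * I)) / (1 - a * Complex.exp (-((θ:ℂ) * I)))) θ := by
      have hinner : HasDerivAt (fun t : ℝ => 1 - a * Complex.exp (-((t:ℂ) * I)))
          (a * (Complex.exp (-((θ:ℂ) * I)) * I)) θ := by
        simpa using ((he'.const_mul a).const_sub 1)
      exact hinner.clog_real (hslit' θ)
    have hsin : HasDerivAt (fun t : ℝ => ((Real.sin t : ℂ)))
        ((Real.cos θ : ℂ)) θ := by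
      have := (Complex.hasDerivAt_sin ((θ:ℂ))).comp_ofReal
      simp only [← Complex.ofReal_sin, ← Complex.ofReal_cos] at this ⊢
      exact this
    have hid : HasDerivAt (fun t : ℝ => ((t:ℂ))) 1 θ := Complex.ofRealCLM.hasDerivAt
    have hD : HasDerivAt B
        ((2 * ((Real.cos θ : ℂ)) + z * 1) / 4 -
          ((z - 2*a)/4) * (1 + I * ((-(a * (Complex.exp ((θ:ℂ) * I) * I))) / (1 - a * Complex.exp ((θ:ℂ) * I)))
            - I * ((a * (Complex.exp (-((θ:ℂ) * I)) * I)) / (1 - a * Complex.exp (-((θ:ℂ) * I)))))) θ :=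
      (((hsin.const_mul 2).add (hid.const_mul z)).div_const 4).sub
        (((hid.add ((hlog.const_mul I))).sub (hlog'.const_mul I)).const_mul ((z - 2*a)/4))
    convert hD using 1
    have hexp : Complex.exp ((θ:ℂ) * I) = Complex.cos θ + Complex.sin θ * I :=
      Complex.exp_mul_I _
    have hexp' : Complex.exp (-((θ:ℂ) * I)) = Complex.cos θ - Complex.sin θ * I := by
      rw [show -((θ:ℂ) * I) = (-(θ:ℂ)) * I by ring, Complex.exp_mul_I, Complex.cos_neg,
        Complex.sin_neg]
      ring
    have huinv : Complex.exp (-((θ:ℂ) * I)) = (Complex.exp ((θ:ℂ) * I))⁻¹ :=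
      Complex.exp_neg _
    have hcos : ((Real.cos θ : ℂ)) = (Complex.exp ((θ:ℂ) * I) + (Complex.exp ((θ:ℂ) * I))⁻¹) / 2 := by
      rw [← huinv, hexp, hexp', Complex.ofReal_cos]
      ring
    have hs2 : ((Real.sin θ : ℂ))^2
        = -((Complex.exp ((θ:ℂ) * I) - (Complex.exp ((θ:ℂ) * I))⁻¹)^2) / 4 := by
      rw [← huinv, hexp, hexp', Complex.ofReal_sin]
      have : Complex.cos ↑θ + Complex.sin ↑θ * I - (Complex.cos ↑θ - Complex.sin ↑θ * I)
          = 2 * Complex.sin ↑θ * I := by ring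
      rw [this]
      have : (2 * Complex.sin ↑θ * I)^2 = -4 * (Complex.sin ↑θ)^2 := by
        have := Complex.I_mul_I
        ring_nf
        linear_combination (Complex.sin ↑θ)^2 * 4 * Complex.I_sq
      rw [this]
      ring
    rw [huinv]
    exact alg_identity a (Complex.exp ((θ:ℂ) * I)) ((Real.cos θ : ℂ)) ((Real.sin θ : ℂ)) z
      ha0 hu0 (h1au θ) (by rw [← huinv]; exact h1au' θ) (hden θ) hzeq hcos hs2
  have hcont : Continuous fun θ : ℝ => ((Real.sin θ : ℂ))^2 / (z - 2 * ((Real.cos θ : ℂ))) := by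
    apply Continuous.div
    · exact (Complex.continuous_ofReal.comp Real.continuous_sin).pow 2
    · exact continuous_const.sub (continuous_const.mul (Complex.continuous_ofReal.comp Real.continuous_cos))
    · exact hden
  rw [intervalIntegral.integral_eq_sub_of_hasDerivAt (fun θ _ => key θ)
      (hcont.intervalIntegrable 0 Real.pi)]
  have hBpi : B Real.pi = z * Real.pi / 4 - ((z - 2*a)/4) * Real.pi := by
    rw [hB]
    simp only [Real.sin_pi, Complex.ofReal_zero, mul_zero, Complex.exp_pi_mul_I]
    rw [Complex.exp_neg, Complex.exp_pi_mul_I]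
    norm_num
    try ring
  have hB0 : B 0 = 0 := by
    rw [hB]
    simp only [Real.sin_zero, Complex.ofReal_zero, mul_zero, zero_mul, neg_zero,
      Complex.exp_zero, mul_one]
    ring
  rw [hBpi, hB0]
  ring


lemma mSC_eq (z a : ℂ) (hz : 0 < z.im) (ha : ‖a‖ < 1)
    (hza : a^2 - z*a + 1 = 0) : mSC z = -a := by
  set g : ℝ → ℂ := fun x => (1 / ((x : ℂ) - z)) *
    (((1 / (2 * Real.pi)) * Real.sqrt (4 - x ^ 2) : ℝ) : ℂ) with hg
  have hgden : ∀ x : ℝ, ((x:ℂ) - z) ≠ 0 := by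
    intro x h
    have := congrArg Complex.im h
    simp at this
    linarith
  have hgcont : Continuous g := by
    apply Continuous.mul
    · exact Continuous.div continuous_const
        ((Complex.continuous_ofReal).sub continuous_const) hgden
    · apply Complex.continuous_ofReal.comp
      exact continuous_const.mul ((continuous_const.sub (continuous_pow 2)).sqrt)
  have hcv := intervalIntegral.integral_comp_smul_deriv
    (f := fun θ : ℝ => 2 * Real.cos θ) (f' := fun θ : ℝ => 2 * -Real.sin θ)
    (g := g) (a := 0) (b := Real.pi)
    (fun θ _ => (Real.hasDerivAt_cos θ).const_mul 2)
    (continuous_const.mul Real.continuous_sin.neg).continuousOn hgcont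
  simp only [Real.cos_zero, mul_one, Real.cos_pi, mul_neg_one, Function.comp] at hcv
  have h1 : mSC z = -∫ θ in (0:ℝ)..Real.pi, (2 * -Real.sin θ) • g (2 * Real.cos θ) := by
    rw [hcv, mSC, ← intervalIntegral.integral_symm]
  rw [h1]
  have h2 : ∀ θ ∈ Set.uIcc (0:ℝ) Real.pi,
      (2 * -Real.sin θ) • g (2 * Real.cos θ)
        = (2/Real.pi) * (((Real.sin θ : ℂ))^2 / (z - 2 * ((Real.cos θ : ℂ)))) := by
    intro θ hθ
    rw [Set.uIcc_of_le Real.pi_pos.le] at hθ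
    have hsin : 0 ≤ Real.sin θ := Real.sin_nonneg_of_nonneg_of_le_pi hθ.1 hθ.2
    have hsqrt : Real.sqrt (4 - (2 * Real.cos θ)^2) = 2 * Real.sin θ := by
      have h4 : 4 - (2 * Real.cos θ)^2 = (2 * Real.sin θ)^2 := by
        have := Real.sin_sq_add_cos_sq θ
        nlinarith
      rw [h4, Real.sqrt_sq (by linarith)]
    rw [hg]
    simp only [Complex.real_smul]
    rw [hsqrt]
    have hpi0 : (Real.pi : ℂ) ≠ 0 := by
      simpa using Real.pi_ne_zero
    have hden : z - 2 * ((Real.cos θ : ℂ)) ≠ 0 := by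
      intro h
      have := congrArg Complex.im h
      simp at this
      linarith
    have hden' : 2 * ((Real.cos θ : ℝ) : ℂ) - z ≠ 0 := by
      intro h
      have := congrArg Complex.im h
      simp at this
      linarith
    push_cast
    field_simp [hden, hden', hpi0]
    rw [Complex.ofReal_cos] at hden hden'
    rw [neg_div', div_eq_div_iff hden' hden]
    ring
  rw [intervalIntegral.integral_congr h2]
  rw [intervalIntegral.integral_const_mul, core_integral z a hz ha hza]
  have hpi0 : (Real.pi : ℂ) ≠ 0 := by simpa using Real.pi_ne_zero
  field_simp

theorem stmt6 (z : ℂ) (hz : 0 < z.im) :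
    (∃! m : ℂ, 0 < m.im ∧ -1 / m = z + m) ∧
    (∀ m : ℂ, (0 < m.im ∧ -1 / m = z + m) → m = mSC z) := by
  obtain ⟨a, hza, ha⟩ := exists_root z hz
  have ha0 : a ≠ 0 := by intro h; rw [h] at hza; simp at hza
  have hainv : a⁻¹ = z - a := by field_simp; linear_combination hza
  have haim : a.im < 0 := by
    have h1 : (a⁻¹).im = -a.im / Complex.normSq a := Complex.inv_im a
    have h2 : (a⁻¹).im = z.im - a.im := by rw [hainv]; simp
    have hn : 0 < Complex.normSq a := Complex.normSq_pos.mpr ha0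
    have hn1 : Complex.normSq a < 1 := by
      rw [Complex.normSq_eq_norm_sq]
      nlinarith [norm_nonneg a]
    by_contra h
    push_neg at h
    have heq2 : -a.im / Complex.normSq a = z.im - a.im := h1 ▸ h2
    have hmul : -a.im = (z.im - a.im) * Complex.normSq a := (div_eq_iff hn.ne').mp heq2
    nlinarith [mul_pos hn hz, mul_nonneg h (show (0:ℝ) ≤ 1 - Complex.normSq a by linarith)]
  have him : 0 < (-a).im := by simp; linarith
  have heq : -1 / (-a) = z + (-a) := by
    field_simp
    linear_combination hza
  constructor
  · exact ⟨-a, ⟨him, heq⟩, fun y hy => sol_unique z hz hy ⟨him, heq⟩⟩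
  · intro m hm
    rw [mSC_eq z a hz ha hza]
    exact sol_unique z hz hm ⟨him, heq⟩
end

section
/- Let X, Y be N×N complex matrices and ⟨M⟩ = N^{-1} Tr M. Then |⟨X Y⟩| ≤ (⟨X* X (Y Y*)^{1/2}⟩ · ⟨(Y* Y)^{1/2}⟩)^{1/2}, where (YY*)^{1/2} and (Y*Y)^{1/2} denote the positive semidefinite square roots. -/
open Matrix
open scoped ComplexOrder

/-- Normalized trace `⟨M⟩ = N⁻¹ Tr M`. -/
noncomputable def ntrace (N : ℕ) (M : Matrix (Fin N) (Fin N) ℂ) : ℂ :=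
  M.trace / N

/-- The positive semidefinite square root, as `Matrix.PosSemidef.sqrt` was defined in the older Mathlib. -/
noncomputable def Matrix.PosSemidef.sqrt {n : Type*} [Fintype n] [DecidableEq n] {A : Matrix n n ℂ}
    (hA : A.PosSemidef) : Matrix n n ℂ :=
  (hA.1.eigenvectorUnitary : Matrix n n ℂ) *
    diagonal (fun i => ((Real.sqrt (hA.1.eigenvalues i) : ℝ) : ℂ)) *
    (star hA.1.eigenvectorUnitary : Matrix n n ℂ)

lemma cs_sum {ι : Type*} [Fintype ι] (f g : ι → ℂ) :
    ‖∑ i, f i * g i‖ ≤ Real.sqrt (∑ i, ‖f i‖^2) * Real.sqrt (∑ i, ‖g i‖^2) := by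
  let x : EuclideanSpace ℂ ι := WithLp.toLp 2 (fun i => star (f i))
  let y : EuclideanSpace ℂ ι := WithLp.toLp 2 g
  have h := norm_inner_le_norm (𝕜 := ℂ) x y
  rw [EuclideanSpace.norm_eq x, EuclideanSpace.norm_eq y] at h
  have hinner : (inner ℂ x y : ℂ) = ∑ i, f i * g i := by
    rw [PiLp.inner_apply]
    simp [x, y, RCLike.inner_apply, mul_comm]
  rw [hinner] at h
  simpa [x, y] using h

theorem stmt7 (N : ℕ) (X Y : Matrix (Fin N) (Fin N) ℂ) :
    ‖ntrace N (X * Y)‖ ≤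
      Real.sqrt
        (‖ntrace N (Xᴴ * X * (Matrix.posSemidef_self_mul_conjTranspose Y).sqrt)‖ *
         ‖ntrace N (Matrix.posSemidef_conjTranspose_mul_self Y).sqrt‖) := by
  classical
  set hP := Matrix.posSemidef_self_mul_conjTranspose Y with hPd
  set hQ := Matrix.posSemidef_conjTranspose_mul_self Y with hQd
  set U : Matrix (Fin N) (Fin N) ℂ := ↑hP.1.eigenvectorUnitary with hUd
  set V : Matrix (Fin N) (Fin N) ℂ := ↑hQ.1.eigenvectorUnitary with hVd
  set μ : Fin N → ℝ := hP.1.eigenvalues with hμd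
  set ν : Fin N → ℝ := hQ.1.eigenvalues with hνd
  have hμ0 : ∀ i, 0 ≤ μ i := hP.eigenvalues_nonneg
  have hν0 : ∀ j, 0 ≤ ν j := hQ.eigenvalues_nonneg
  have hUU : star U * U = 1 := Matrix.mem_unitaryGroup_iff'.mp hP.1.eigenvectorUnitary.2
  have hUU' : U * star U = 1 := Matrix.mem_unitaryGroup_iff.mp hP.1.eigenvectorUnitary.2
  have hVV : star V * V = 1 := Matrix.mem_unitaryGroup_iff'.mp hQ.1.eigenvectorUnitary.2
  have hVV' : V * star V = 1 := Matrix.mem_unitaryGroup_iff.mp hQ.1.eigenvectorUnitary.2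
  have hYY : Y * Yᴴ = U * diagonal (Complex.ofReal ∘ μ) * star U := hP.1.spectral_theorem
  have hYY' : Yᴴ * Y = V * diagonal (Complex.ofReal ∘ ν) * star V := hQ.1.spectral_theorem
  have hS : hP.sqrt = U * diagonal (Complex.ofReal ∘ Real.sqrt ∘ μ) * star U := rfl
  have hT : hQ.sqrt = V * diagonal (Complex.ofReal ∘ Real.sqrt ∘ ν) * star V := rfl
  set Z : Matrix (Fin N) (Fin N) ℂ := star U * Y * V with hZd
  set A : Matrix (Fin N) (Fin N) ℂ := star V * X * U with hAd
  have hZc : Zᴴ = star V * Yᴴ * U := by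
    simp [hZd, conjTranspose_mul, star_eq_conjTranspose, mul_assoc]
  have hAc : Aᴴ = star U * Xᴴ * V := by
    simp [hAd, conjTranspose_mul, star_eq_conjTranspose, mul_assoc]
  have hZ1 : Z * Zᴴ = diagonal (Complex.ofReal ∘ μ) := by
    rw [hZc, hZd]
    calc star U * Y * V * (star V * Yᴴ * U)
        = star U * (Y * (V * star V) * Yᴴ) * U := by noncomm_ring
      _ = star U * (Y * Yᴴ) * U := by rw [hVV']; noncomm_ring
      _ = star U * U * diagonal (Complex.ofReal ∘ μ) * (star U * U) := by rw [hYY]; noncomm_ring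
      _ = diagonal (Complex.ofReal ∘ μ) := by rw [hUU]; noncomm_ring
  have hZ2 : Zᴴ * Z = diagonal (Complex.ofReal ∘ ν) := by
    rw [hZc, hZd]
    calc star V * Yᴴ * U * (star U * Y * V)
        = star V * (Yᴴ * (U * star U) * Y) * V := by noncomm_ring
      _ = star V * (Yᴴ * Y) * V := by rw [hUU']; noncomm_ring
      _ = star V * V * diagonal (Complex.ofReal ∘ ν) * (star V * V) := by rw [hYY']; noncomm_ring
      _ = diagonal (Complex.ofReal ∘ ν) := by rw [hVV]; noncomm_ring
  -- row and column norms
  have hrow : ∀ i, ∑ j, ‖Z i j‖^2 = μ i := by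
    intro i
    have h := congrFun (congrFun hZ1 i) i
    rw [Matrix.mul_apply] at h
    simp only [Matrix.conjTranspose_apply, Matrix.diagonal_apply_eq, Function.comp_apply] at h
    have h2 : ∀ j, Z i j * star (Z i j) = ((‖Z i j‖^2 : ℝ) : ℂ) := by
      intro j
      rw [RCLike.star_def, RCLike.mul_conj]
      norm_cast
    rw [Finset.sum_congr rfl (fun j _ => h2 j)] at h
    exact_mod_cast h
  have hcol : ∀ j, ∑ i, ‖Z i j‖^2 = ν j := by
    intro j
    have h := congrFun (congrFun hZ2 j) j
    rw [Matrix.mul_apply] at h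
    simp only [Matrix.conjTranspose_apply, Matrix.diagonal_apply_eq, Function.comp_apply] at h
    have h2 : ∀ i, star (Z i j) * Z i j = ((‖Z i j‖^2 : ℝ) : ℂ) := by
      intro i
      rw [RCLike.star_def, RCLike.conj_mul]
      norm_cast
    rw [Finset.sum_congr rfl (fun i _ => h2 i)] at h
    exact_mod_cast h
  have hZzero : ∀ i j, μ i = 0 → Z i j = 0 := by
    intro i j h0
    have hsum : ∑ j, ‖Z i j‖^2 = 0 := by rw [hrow i, h0]
    have := (Finset.sum_eq_zero_iff_of_nonneg (fun j _ => sq_nonneg ‖Z i j‖)).mp hsum j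
      (Finset.mem_univ j)
    simpa using this
  have hμpos : ∀ i j, Z i j ≠ 0 → μ i ≠ 0 := fun i j hz h0 => hz (hZzero i j h0)
  have hkey : ∀ i j, Z i j ≠ 0 → μ i = ν j := by
    intro i j hz
    have hcomm : diagonal (Complex.ofReal ∘ μ) * Z = Z * diagonal (Complex.ofReal ∘ ν) := by
      rw [← hZ1, ← hZ2, mul_assoc]
    have h := congrFun (congrFun hcomm i) j
    rw [Matrix.diagonal_mul, Matrix.mul_diagonal] at h
    simp only [Function.comp_apply] at h
    have : ((μ i : ℂ)) = ((ν j : ℂ)) := by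
      have h' : (μ i : ℂ) * Z i j = (ν j : ℂ) * Z i j := by rw [h]; ring
      exact mul_right_cancel₀ hz h'
    exact_mod_cast this
  -- abbreviations for the two real quantities
  set a : ℝ := ∑ i, Real.sqrt (μ i) * ∑ j, ‖A j i‖^2 with had
  set b : ℝ := ∑ j, Real.sqrt (ν j) with hbd
  have ha0 : 0 ≤ a := Finset.sum_nonneg fun i _ =>
    mul_nonneg (Real.sqrt_nonneg _) (Finset.sum_nonneg fun j _ => sq_nonneg _)
  have hb0 : 0 ≤ b := Finset.sum_nonneg fun j _ => Real.sqrt_nonneg _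
  -- trace identities
  have hAZ : A * Z = star V * (X * Y) * V := by
    rw [hAd, hZd]
    calc star V * X * U * (star U * Y * V)
        = star V * (X * (U * star U) * Y) * V := by noncomm_ring
      _ = star V * (X * Y) * V := by rw [hUU']; noncomm_ring
  have htr1 : (X * Y).trace = (A * Z).trace := by
    rw [hAZ, Matrix.trace_mul_cycle, hVV', one_mul]
  have hAA : Aᴴ * A = star U * (Xᴴ * X) * U := by
    rw [hAc, hAd]
    calc star U * Xᴴ * V * (star V * X * U)
        = star U * (Xᴴ * (V * star V) * X) * U := by noncomm_ring
      _ = star U * (Xᴴ * X) * U := by rw [hVV']; noncomm_ring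
  have htr2 : (Xᴴ * X * hP.sqrt).trace = ((a : ℝ) : ℂ) := by
    have e1 : Xᴴ * X * hP.sqrt
        = (Xᴴ * X * U) * diagonal (Complex.ofReal ∘ Real.sqrt ∘ μ) * star U := by
      rw [hS]; noncomm_ring
    have e2 : star U * (Xᴴ * X * U) = Aᴴ * A := by rw [hAA]; noncomm_ring
    rw [e1, Matrix.trace_mul_cycle, e2]
    have e4 : ∀ i, (Aᴴ * A) i i = ((∑ j, ‖A j i‖^2 : ℝ) : ℂ) := by
      intro i
      rw [Matrix.mul_apply]
      push_cast
      refine Finset.sum_congr rfl fun j _ => ?_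
      rw [Matrix.conjTranspose_apply, RCLike.star_def, RCLike.conj_mul]
      norm_cast
    have e3 : (Aᴴ * A * diagonal (Complex.ofReal ∘ Real.sqrt ∘ μ)).trace
        = ∑ i, (Aᴴ * A) i i * ((Real.sqrt (μ i) : ℝ) : ℂ) := by
      simp [Matrix.trace, Matrix.diag, Matrix.mul_diagonal]
    rw [e3, had]
    push_cast
    refine Finset.sum_congr rfl fun i _ => ?_
    rw [e4 i]
    push_cast
    ring
  have htr3 : (hQ.sqrt).trace = ((b : ℝ) : ℂ) := by
    rw [hT, Matrix.trace_mul_cycle, hVV, one_mul, Matrix.trace_diagonal, hbd]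
    push_cast
    rfl
  -- Cauchy-Schwarz setup
  set c : Fin N → ℝ := fun i => Real.sqrt (Real.sqrt (μ i)) with hcd
  have hc0 : ∀ i, 0 ≤ c i := fun i => Real.sqrt_nonneg _
  have hcsq : ∀ i, c i ^ 2 = Real.sqrt (μ i) := fun i => Real.sq_sqrt (Real.sqrt_nonneg _)
  have hcne : ∀ i, μ i ≠ 0 → c i ≠ 0 := fun i h =>
    Real.sqrt_ne_zero'.mpr (Real.sqrt_pos.mpr (lt_of_le_of_ne (hμ0 i) (Ne.symm h)))
  set f : Fin N × Fin N → ℂ := fun p => A p.1 p.2 * ((c p.2 : ℝ) : ℂ) with hfd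
  set g : Fin N × Fin N → ℂ :=
    fun p => Z p.2 p.1 * (if μ p.2 = 0 then 0 else (((c p.2 : ℝ) : ℂ))⁻¹) with hgd
  have hfg : ∑ p : Fin N × Fin N, f p * g p = (A * Z).trace := by
    simp only [Matrix.trace, Matrix.diag, Matrix.mul_apply]
    rw [Fintype.sum_prod_type]
    refine Finset.sum_congr rfl fun j _ => Finset.sum_congr rfl fun i _ => ?_
    by_cases h : μ i = 0
    · simp [hfd, hgd, h, hZzero i j h]
    · have hne : ((c i : ℝ) : ℂ) ≠ 0 := Complex.ofReal_ne_zero.mpr (hcne i h)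
      simp only [hfd, hgd, if_neg h]
      field_simp
  have hf2 : ∑ p : Fin N × Fin N, ‖f p‖^2 = a := by
    rw [Fintype.sum_prod_type, Finset.sum_comm, had]
    refine Finset.sum_congr rfl fun i _ => ?_
    rw [Finset.mul_sum]
    refine Finset.sum_congr rfl fun j _ => ?_
    rw [hfd]
    simp only []
    rw [norm_mul, mul_pow, Complex.norm_real, Real.norm_of_nonneg (hc0 i), hcsq i]
    ring
  have hg2 : ∑ p : Fin N × Fin N, ‖g p‖^2 = b := by
    have step : ∀ p : Fin N × Fin N,
        ‖g p‖^2 = if ν p.1 = 0 then 0 else ‖Z p.2 p.1‖^2 / Real.sqrt (ν p.1) := by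
      rintro ⟨j, i⟩
      by_cases hz : Z i j = 0
      · simp [hgd, hz]
      · have hμν := hkey i j hz
        have hμne := hμpos i j hz
        have hνne : ν j ≠ 0 := by rw [← hμν]; exact hμne
        rw [if_neg hνne, ← hμν]
        simp only [hgd, if_neg hμne]
        rw [norm_mul, mul_pow, norm_inv, Complex.norm_real, Real.norm_of_nonneg (hc0 i),
          inv_pow, hcsq i, div_eq_mul_inv]
    rw [Finset.sum_congr rfl fun p _ => step p, Fintype.sum_prod_type, hbd]
    refine Finset.sum_congr rfl fun j _ => ?_
    by_cases hν : ν j = 0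
    · simp [hν]
    · simp only [if_neg hν]
      rw [← Finset.sum_div, hcol j, Real.div_sqrt]
  have main : ‖(X * Y).trace‖ ≤ Real.sqrt (a * b) := by
    rw [htr1, ← hfg]
    calc ‖∑ p : Fin N × Fin N, f p * g p‖
        ≤ Real.sqrt (∑ p : Fin N × Fin N, ‖f p‖^2) *
          Real.sqrt (∑ p : Fin N × Fin N, ‖g p‖^2) := cs_sum f g
      _ = Real.sqrt (a * b) := by rw [hf2, hg2, Real.sqrt_mul ha0]
  have hn1 : ‖(Xᴴ * X * hP.sqrt).trace‖ = a := by
    rw [htr2, Complex.norm_real, Real.norm_of_nonneg ha0]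
  have hn2 : ‖(hQ.sqrt).trace‖ = b := by
    rw [htr3, Complex.norm_real, Real.norm_of_nonneg hb0]
  simp only [ntrace]
  rcases Nat.eq_zero_or_pos N with hN | hN
  · subst hN
    simp only [Nat.cast_zero, div_zero, norm_zero]
    exact Real.sqrt_nonneg _
  · have hNpos : (0:ℝ) < N := by exact_mod_cast hN
    rw [norm_div, norm_div, norm_div, Complex.norm_natCast, hn1, hn2,
      div_mul_div_comm, show ((N:ℝ) * N) = (N:ℝ)^2 by ring,
      Real.sqrt_div (mul_nonneg ha0 hb0), Real.sqrt_sq (le_of_lt hNpos)]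
    gcongr
end
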